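/- Any Palais-Smale sequence (u_k) for the functional F_λ(u) = (1/p)[u]_{s,p}^p − (λ/q)∫ h|u|^q dx − (1/p*_s)∫ K|u|^{p*_s} dx with p < q < p*_s, K ≥ 0 bounded, h satisfying the compact embedding hypothesis, is bounded in D^{s,p}(R^n). -/

import Mathlib

open MeasureTheory ENNReal Filter Metric Topology

noncomputable section

/-- Euclidean space ℝ^n. -/
abbrev Eu (n : ℕ) := EuclideanSpace ℝ (Fin n)

/-- `|D^s v(x)|^p = ∫_{ℝ^n} |v(x+h)-v(x)|^p / |h|^{n+sp} dh`,
the (s,p)-fractional gradient (to the p-th power), as an extended real. -/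
def Dsp (n : ℕ) (s p : ℝ) (v : Eu n → ℝ) (x : Eu n) : ℝ≥0∞ :=
  ∫⁻ h, ENNReal.ofReal (|v (x + h) - v x| ^ p / ‖h‖ ^ ((n : ℝ) + s * p))

/-- Gagliardo seminorm `[v]_{s,p}` to the p-th power:
`∬ |v(x)-v(y)|^p/|x-y|^{n+sp} dxdy = ∫ |D^s v(x)|^p dx`. -/
def Gag (n : ℕ) (s p : ℝ) (v : Eu n → ℝ) : ℝ≥0∞ := ∫⁻ x, Dsp n s p v x

/-- Membership in `D^{s,p}(ℝ^n)`: `v ∈ L^{p*_s}` and finite Gagliardo seminorm. -/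
def MemDsp (n : ℕ) (s p : ℝ) (v : Eu n → ℝ) : Prop :=
  MemLp v (ENNReal.ofReal ((n * p) / (n - s * p))) ∧ Gag n s p v < ⊤

/-- The best constant `S` in the fractional Sobolev inequality
`S ‖v‖_{p*_s}^p ≤ [v]_{s,p}^p`. -/
def sobolevS (n : ℕ) (s p : ℝ) : ℝ :=
  sInf {r : ℝ | ∃ v : Eu n → ℝ, ContDiff ℝ (⊤ : ℕ∞) v ∧ HasCompactSupport v ∧ v ≠ 0 ∧
    r = (Gag n s p v).toReal /
      ((∫ x, |v x| ^ ((n * p) / (n - s * p))) ^ ((n - s * p) / n))}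

/-- Weak convergence in `D^{s,p}(ℝ^n)`: boundedness of the Gagliardo seminorms
together with distributional convergence. -/
def WeakConvDsp (n : ℕ) (s p : ℝ) (u : ℕ → Eu n → ℝ) (v : Eu n → ℝ) : Prop :=
  (∃ B : ℝ, ∀ k, Gag n s p (u k) ≤ ENNReal.ofReal B) ∧
  ∀ φ : Eu n → ℝ, ContDiff ℝ (⊤ : ℕ∞) φ → HasCompactSupport φ →
    Tendsto (fun k => ∫ x, u k x * φ x) atTop (𝓝 (∫ x, v x * φ x))

/-- Compact embedding of `D^{s,p}(ℝ^n)` into the weighted Lebesgue space `L^q(w dx)`. -/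
def CompactEmbedLq (n : ℕ) (s p q : ℝ) (w : Eu n → ℝ) : Prop :=
  ∀ u : ℕ → Eu n → ℝ, (∀ k, MemDsp n s p (u k)) →
    (∃ B : ℝ, ∀ k, Gag n s p (u k) ≤ ENNReal.ofReal B) →
    ∃ σ : ℕ → ℕ, StrictMono σ ∧ ∃ v : Eu n → ℝ, MemDsp n s p v ∧
      WeakConvDsp n s p (u ∘ σ) v ∧
      Tendsto (fun j => ∫ x, |u (σ j) x - v x| ^ q * w x) atTop (𝓝 0)

/-- The energy functional
`F_λ(u) = (1/p)[u]_{s,p}^p − (λ/q)∫ h|u|^q − (1/p*_s)∫ K|u|^{p*_s}`. -/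
def Flam (n : ℕ) (s p q lam : ℝ) (h K : Eu n → ℝ) (u : Eu n → ℝ) : ℝ :=
  (1 / p) * (Gag n s p u).toReal - (lam / q) * (∫ x, h x * |u x| ^ q)
    - ((n - s * p) / (n * p)) * ∫ x, K x * |u x| ^ (n * p / (n - s * p))

/-- The derivative of the energy functional `F_λ` at `u` in the direction `v`:
`⟨F_λ'(u), v⟩ = ⟨(-Δ_p)^s u, v⟩ − λ∫ h|u|^{q-2}u v − ∫ K|u|^{p*_s-2}u v`. -/
def FlamDer (n : ℕ) (s p q lam : ℝ) (h K : Eu n → ℝ) (u v : Eu n → ℝ) : ℝ :=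
  (∫ x, ∫ y, |u x - u y| ^ (p - 2) * (u x - u y) * (v x - v y) / ‖x - y‖ ^ ((n : ℝ) + s * p))
    - lam * (∫ x, h x * |u x| ^ (q - 2) * u x * v x)
    - ∫ x, K x * |u x| ^ (n * p / (n - s * p) - 2) * u x * v x
section Aux

private lemma rpow_helper (r : ℝ) (hr : 0 < r) (t : ℝ) :
    |t| ^ (r - 2) * t * t = |t| ^ r := by
  rcases eq_or_ne t 0 with h | h
  · simp [h, Real.zero_rpow hr.ne']
  · have ht : 0 < |t| := abs_pos.mpr h
    have h2 : t * t = |t| ^ (2 : ℝ) := by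
      rw [show (2:ℝ) = ((2:ℕ):ℝ) by norm_num, Real.rpow_natCast, sq_abs]; ring
    calc |t| ^ (r - 2) * t * t = |t| ^ (r - 2) * (|t| ^ (2:ℝ)) := by
          rw [mul_assoc, h2]
      _ = |t| ^ (r - 2 + 2) := (Real.rpow_add ht _ _).symm
      _ = |t| ^ r := by norm_num

private lemma rpow_helper' (r : ℝ) (hr : 0 < r) (a t : ℝ) :
    a * |t| ^ (r - 2) * t * t = a * |t| ^ r := by
  calc a * |t| ^ (r - 2) * t * t = a * (|t| ^ (r - 2) * t * t) := by ring
    _ = a * |t| ^ r := by rw [rpow_helper r hr]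

private lemma integral_toReal_le {α : Type*} [MeasurableSpace α] {μ : Measure α}
    (f : α → ℝ≥0∞) (hne : (∫⁻ x, f x ∂μ) ≠ ⊤) :
    (∫ x, (f x).toReal ∂μ) ≤ (∫⁻ x, f x ∂μ).toReal := by
  by_cases hi : Integrable (fun x => (f x).toReal) μ
  · rw [MeasureTheory.integral_eq_lintegral_of_nonneg_ae
      (Filter.Eventually.of_forall fun x => ENNReal.toReal_nonneg) hi.aestronglyMeasurable]
    exact ENNReal.toReal_mono hne (lintegral_mono fun x => ENNReal.ofReal_toReal_le)
  · rw [integral_undef hi]; exact ENNReal.toReal_nonneg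

private lemma inner_eq (n : ℕ) (s p : ℝ) (v : Eu n → ℝ)
    (hv : AEStronglyMeasurable v (volume : Measure (Eu n))) (x : Eu n) :
    (∫ y, |v x - v y| ^ p / ‖x - y‖ ^ ((n : ℝ) + s * p)) = (Dsp n s p v x).toReal := by
  obtain ⟨g, hgm, hg⟩ := hv
  have hmeas : AEStronglyMeasurable
      (fun y => |v x - v y| ^ p / ‖x - y‖ ^ ((n : ℝ) + s * p)) (volume : Measure (Eu n)) := by
    refine AEStronglyMeasurable.congr
      (f := fun y => |v x - g y| ^ p / ‖x - y‖ ^ ((n : ℝ) + s * p)) ?_ ?_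
    · have m1 : Measurable fun y : Eu n => |v x - g y| ^ p :=
        ((measurable_const.sub hgm.measurable).abs).pow_const p
      have m2 : Measurable fun y : Eu n => ‖x - y‖ ^ ((n : ℝ) + s * p) :=
        ((measurable_const.sub measurable_id).norm).pow_const _
      exact (m1.div m2).aestronglyMeasurable
    · filter_upwards [hg] with y hy
      rw [hy]
  have hnn : 0 ≤ᵐ[(volume : Measure (Eu n))]
      fun y => |v x - v y| ^ p / ‖x - y‖ ^ ((n : ℝ) + s * p) :=
    Filter.Eventually.of_forall fun y =>
      div_nonneg (Real.rpow_nonneg (abs_nonneg _) _) (Real.rpow_nonneg (norm_nonneg _) _)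
  rw [MeasureTheory.integral_eq_lintegral_of_nonneg_ae hnn hmeas]
  congr 1
  rw [Dsp, ← lintegral_add_left_eq_self
    (fun y => ENNReal.ofReal (|v x - v y| ^ p / ‖x - y‖ ^ ((n : ℝ) + s * p))) x]
  refine lintegral_congr fun z => ?_
  have h1 : x - (x + z) = -z := by abel
  rw [abs_sub_comm, h1, norm_neg]

private lemma alg1 (G T H KK D lam p q : ℝ) (hq0 : 0 < q)
    (h5 : T ≤ G) (h6 : 0 ≤ KK) (hD : D ≤ 1 / q) :
    (1 / p - 1 / q) * G ≤ 1 / p * G - lam / q * H - D * KK - 1 / q * (T - lam * H - KK) := by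
  have hiq : (0:ℝ) ≤ 1 / q := by positivity
  have a1 : 1 / q * T ≤ 1 / q * G := mul_le_mul_of_nonneg_left h5 hiq
  have a2 : 0 ≤ (1 / q - D) * KK := mul_nonneg (by linarith) h6
  have e : 1 / p * G - lam / q * H - D * KK - 1 / q * (T - lam * H - KK)
      = 1 / p * G - 1 / q * T + (1 / q - D) * KK := by ring
  rw [e]
  linarith [a1, a2]

private lemma alg2 (F F' Cc Ee Gp eps q : ℝ) (hq0 : 0 < q)
    (hF1 : F ≤ Cc) (hF2 : -(eps * Gp) ≤ F') (heps : eps ≤ Ee) (hGp0 : 0 ≤ Gp) :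
    F - 1 / q * F' ≤ Cc + Ee / q * Gp := by
  have hiq : (0:ℝ) ≤ 1 / q := by positivity
  have a1 : 1 / q * (-F') ≤ 1 / q * (eps * Gp) := mul_le_mul_of_nonneg_left (by linarith) hiq
  have a2 : 1 / q * (eps * Gp) ≤ 1 / q * (Ee * Gp) :=
    mul_le_mul_of_nonneg_left (mul_le_mul_of_nonneg_right heps hGp0) hiq
  have e : F - 1 / q * F' = F + 1 / q * (-F') := by ring
  rw [e]
  have e2 : 1 / q * (Ee * Gp) = Ee / q * Gp := by ring
  linarith [a1, a2]

end Aux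
/-- any Palais-Smale sequence for `F_λ` (with `p < q < p*_s`, `K ≥ 0` bounded,
`h` satisfying the compact embedding hypothesis) is bounded in `D^{s,p}(ℝ^n)`. -/
theorem palais_smale_bounded (n : ℕ) (s p q lam : ℝ)
    (hs : 0 < s) (hs1 : s < 1) (hp : 1 < p) (hpq : p < q)
    (hq : q < n * p / (n - s * p)) (hspn : s * p < n) (hlam : 0 < lam)
    (h K : Eu n → ℝ) (hh0 : ∀ x, 0 ≤ h x) (hcompact : CompactEmbedLq n s p q h)
    (hK0 : ∀ x, 0 ≤ K x) (MK : ℝ) (hKbd : ∀ x, K x ≤ MK)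
    (u : ℕ → Eu n → ℝ) (hmem : ∀ k, MemDsp n s p (u k))
    (C : ℝ) (hFbd : ∀ k, |Flam n s p q lam h K (u k)| ≤ C)
    (ε : ℕ → ℝ) (hε0 : ∀ k, 0 ≤ ε k) (hε : Tendsto ε atTop (𝓝 0))
    (hPS : ∀ k, ∀ v : Eu n → ℝ, MemDsp n s p v →
      |FlamDer n s p q lam h K (u k) v| ≤ ε k * (Gag n s p v).toReal ^ (1 / p)) :
    ∃ B : ℝ, ∀ k, Gag n s p (u k) ≤ ENNReal.ofReal B := by
  have hp0 : (0:ℝ) < p := lt_trans one_pos hp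
  have hq0 : (0:ℝ) < q := lt_trans hp0 hpq
  have hsp0 : (0:ℝ) < s * p := mul_pos hs hp0
  have hn : (0:ℝ) < (n:ℝ) := lt_trans hsp0 hspn
  have hnsp : (0:ℝ) < (n:ℝ) - s * p := sub_pos.mpr hspn
  have hP0 : (0:ℝ) < (n:ℝ) * p / ((n:ℝ) - s * p) := div_pos (mul_pos hn hp0) hnsp
  obtain ⟨E, hEub⟩ := hε.bddAbove_range
  have hE : ∀ k, ε k ≤ E := fun k => hEub ⟨k, rfl⟩
  have hE0 : (0:ℝ) ≤ E := le_trans (hε0 0) (hE 0)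
  have hC : (0:ℝ) ≤ C := le_trans (abs_nonneg _) (hFbd 0)
  have hc : (0:ℝ) < 1 / p - 1 / q := sub_pos.mpr (one_div_lt_one_div_of_lt hp0 hpq)
  refine ⟨max 1 (((C + E / q) / (1 / p - 1 / q)) ^ (p / (p - 1))), fun k => ?_⟩
  have hG0 : (0:ℝ) ≤ (Gag n s p (u k)).toReal := ENNReal.toReal_nonneg
  have hGag_ne : Gag n s p (u k) ≠ ⊤ := (hmem k).2.ne
  have hGp0 : (0:ℝ) ≤ (Gag n s p (u k)).toReal ^ (1 / p) := Real.rpow_nonneg hG0 _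
  have hae : AEStronglyMeasurable (u k) (volume : Measure (Eu n)) := (hmem k).1.1
  have stepA : FlamDer n s p q lam h K (u k) (u k)
      = (∫ x, (Dsp n s p (u k) x).toReal)
        - lam * (∫ x, h x * |u k x| ^ q)
        - ∫ x, K x * |u k x| ^ ((n:ℝ) * p / ((n:ℝ) - s * p)) := by
    rw [FlamDer]
    simp only [rpow_helper p hp0, rpow_helper' q hq0, rpow_helper' _ hP0]
    congr 1
    congr 1
    exact integral_congr_ae (Filter.Eventually.of_forall fun x => inner_eq n s p (u k) hae x)
  have stepB : (∫ x, (Dsp n s p (u k) x).toReal) ≤ (Gag n s p (u k)).toReal :=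
    integral_toReal_le (μ := (volume : Measure (Eu n))) (Dsp n s p (u k)) hGag_ne
  have stepC : Flam n s p q lam h K (u k)
      = (1 / p) * (Gag n s p (u k)).toReal - (lam / q) * (∫ x, h x * |u k x| ^ q)
        - (((n:ℝ) - s * p) / ((n:ℝ) * p)) *
          ∫ x, K x * |u k x| ^ ((n:ℝ) * p / ((n:ℝ) - s * p)) := rfl
  have stepD : (0:ℝ) ≤ ∫ x, K x * |u k x| ^ ((n:ℝ) * p / ((n:ℝ) - s * p)) :=
    integral_nonneg fun x => mul_nonneg (hK0 x) (Real.rpow_nonneg (abs_nonneg _) _)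
  have hDq : ((n:ℝ) - s * p) / ((n:ℝ) * p) < 1 / q := by
    have := one_div_lt_one_div_of_lt hq0 hq
    rwa [one_div_div] at this
  have key : (1 / p - 1 / q) * (Gag n s p (u k)).toReal
      ≤ C + (E / q) * (Gag n s p (u k)).toReal ^ (1 / p) := by
    have e1 : (1 / p - 1 / q) * (Gag n s p (u k)).toReal ≤ Flam n s p q lam h K (u k)
        - (1 / q) * FlamDer n s p q lam h K (u k) (u k) := by
      rw [stepA, stepC]
      exact alg1 _ _ _ _ _ _ _ _ hq0 stepB stepD hDq.le
    have e2 : Flam n s p q lam h K (u k)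
        - (1 / q) * FlamDer n s p q lam h K (u k) (u k)
        ≤ C + (E / q) * (Gag n s p (u k)).toReal ^ (1 / p) := by
      have hF1 : Flam n s p q lam h K (u k) ≤ C := (abs_le.mp (hFbd k)).2
      have hF2 : -(ε k * (Gag n s p (u k)).toReal ^ (1 / p))
          ≤ FlamDer n s p q lam h K (u k) (u k) := (abs_le.mp (hPS k (u k) (hmem k))).1
      exact alg2 _ _ _ _ _ _ _ hq0 hF1 hF2 (hE k) hGp0
    linarith
  have hGB : (Gag n s p (u k)).toReal
      ≤ max 1 (((C + E / q) / (1 / p - 1 / q)) ^ (p / (p - 1))) := by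
    rcases le_or_gt ((Gag n s p (u k)).toReal) 1 with h1 | h1
    · exact h1.trans (le_max_left _ _)
    · have hGpos : (0:ℝ) < (Gag n s p (u k)).toReal := lt_trans one_pos h1
      have hGp1 : (1:ℝ) ≤ (Gag n s p (u k)).toReal ^ (1 / p) := by
        have := Real.rpow_le_rpow zero_le_one h1.le (by positivity : (0:ℝ) ≤ 1 / p)
        rwa [Real.one_rpow] at this
      have hGpp : (0:ℝ) < (Gag n s p (u k)).toReal ^ (1 / p) :=
        lt_of_lt_of_le one_pos hGp1
      have hcG : (1 / p - 1 / q) * (Gag n s p (u k)).toReal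
          ≤ (C + E / q) * (Gag n s p (u k)).toReal ^ (1 / p) := by
        have h10 : C * 1 ≤ C * (Gag n s p (u k)).toReal ^ (1 / p) :=
          mul_le_mul_of_nonneg_left hGp1 hC
        nlinarith [key, h10]
      have hquot : (Gag n s p (u k)).toReal / (Gag n s p (u k)).toReal ^ (1 / p)
          ≤ (C + E / q) / (1 / p - 1 / q) := by
        rw [div_le_div_iff₀ hGpp hc]
        nlinarith [hcG]
      have hpne : p - 1 ≠ 0 := by linarith
      have hexp : ((1:ℝ) - 1 / p) * (p / (p - 1)) = 1 := by
        field_simp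
      have hpow : (Gag n s p (u k)).toReal ^ ((1:ℝ) - 1 / p)
          = (Gag n s p (u k)).toReal / (Gag n s p (u k)).toReal ^ (1 / p) := by
        rw [Real.rpow_sub hGpos, Real.rpow_one]
      have hGid : (Gag n s p (u k)).toReal
          = ((Gag n s p (u k)).toReal ^ ((1:ℝ) - 1 / p)) ^ (p / (p - 1)) := by
        rw [← Real.rpow_mul hGpos.le, hexp, Real.rpow_one]
      rw [hGid]
      refine le_trans (Real.rpow_le_rpow (Real.rpow_nonneg hGpos.le _)
        (by rw [hpow]; exact hquot) (div_nonneg hp0.le (by linarith))) (le_max_right _ _)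
  calc Gag n s p (u k) = ENNReal.ofReal ((Gag n s p (u k)).toReal) :=
        (ENNReal.ofReal_toReal hGag_ne).symm
    _ ≤ _ := ENNReal.ofReal_le_ofReal hGB
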